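/- arXiv:1204.4423 — 2 statements merged into one kernel-verified Lean document; each statement's English description precedes it below -/
import Mathlib

section
/- Let P = (m,E,R) be a pattern of k-multisets and let s ∈ ℕ ∪ {∞}. If a k-graph G is F_s-free, then every blow-up of G is F_s-free. -/
open Filter Finset

/-! ### Basic `k`-graph framework.

A `k`-graph is represented by a vertex set `V : Finset ℕ` together with an edge set
`G : Finset (Finset ℕ)`; `EdgesUniform k V G` says that all edges are `k`-subsets of `V`. -/

/-- All edges of `G` are `k`-element subsets of the vertex set `V`. -/
def EdgesUniform (k : ℕ) (V : Finset ℕ) (G : Finset (Finset ℕ)) : Prop :=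
  ∀ e ∈ G, e ⊆ V ∧ e.card = k

/-- The hypergraph `(V₁, G₁)` embeds into `(V₂, G₂)`: an injection of vertices mapping
edges to edges.  Equivalently, `(V₁, G₁)` is (isomorphic to) a subgraph of `(V₂, G₂)`. -/
def Embeds (V₁ : Finset ℕ) (G₁ : Finset (Finset ℕ)) (V₂ : Finset ℕ)
    (G₂ : Finset (Finset ℕ)) : Prop :=
  ∃ f : ℕ → ℕ, Set.InjOn f V₁ ∧ (∀ v ∈ V₁, f v ∈ V₂) ∧ ∀ e ∈ G₁, e.image f ∈ G₂

/-- `(V, G)` contains no member of the family `𝓕` as a subgraph. -/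
def IsFree (𝓕 : Set (Finset ℕ × Finset (Finset ℕ))) (V : Finset ℕ)
    (G : Finset (Finset ℕ)) : Prop :=
  ∀ F ∈ 𝓕, ¬ Embeds F.1 F.2 V G

/-- The Turán function `ex(n, 𝓕)`: the maximum number of edges of an `𝓕`-free
`k`-graph on `n` vertices. -/
noncomputable def exNum (k : ℕ) (𝓕 : Set (Finset ℕ × Finset (Finset ℕ))) (n : ℕ) : ℕ :=
  sSup {c | ∃ V G, V.card = n ∧ EdgesUniform k V G ∧ IsFree 𝓕 V G ∧ G.card = c}

/-- `Π^(k)_∞`: the set of Turán densities of arbitrary (possibly infinite) families of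
`k`-graphs.  (The limit of `ex(n,𝓕)/C(n,k)` always exists, so membership is expressed
via `Tendsto`.) -/
def turanDensitySet (k : ℕ) : Set ℝ :=
  {x | ∃ 𝓕 : Set (Finset ℕ × Finset (Finset ℕ)),
        (∀ F ∈ 𝓕, EdgesUniform k F.1 F.2) ∧
        Tendsto (fun n => (exNum k 𝓕 n : ℝ) / (n.choose k : ℝ)) atTop (nhds x)}

/-- `Π^(k)_fin`: the set of Turán densities of finite families of `k`-graphs. -/
def finTuranDensitySet (k : ℕ) : Set ℝ :=
  {x | ∃ 𝓕 : Set (Finset ℕ × Finset (Finset ℕ)), 𝓕.Finite ∧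
        (∀ F ∈ 𝓕, EdgesUniform k F.1 F.2) ∧
        Tendsto (fun n => (exNum k 𝓕 n : ℝ) / (n.choose k : ℝ)) atTop (nhds x)}

/-! ### Blow-ups (vertex cloning and deletion). -/

/-- One blow-up step: either clone an existing vertex `x` into a new vertex `y`
(whose link equals the link of `x`), or delete a vertex together with all edges
through it. -/
inductive BlowupStep : Finset ℕ × Finset (Finset ℕ) → Finset ℕ × Finset (Finset ℕ) → Prop where
  | clone (V : Finset ℕ) (G : Finset (Finset ℕ)) (x y : ℕ) (hx : x ∈ V) (hy : y ∉ V) :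
      BlowupStep (V, G)
        (insert y V, G ∪ (G.filter fun e => x ∈ e).image fun e => insert y (e.erase x))
  | delete (V : Finset ℕ) (G : Finset (Finset ℕ)) (x : ℕ) (hx : x ∈ V) :
      BlowupStep (V, G) (V.erase x, G.filter fun e => x ∉ e)

/-- `(W, K)` is a blow-up of `(V, G)`: it is obtained from `(V, G)` by a finite
sequence of vertex clonings and vertex deletions. -/
def IsBlowupOf (W : Finset ℕ) (K : Finset (Finset ℕ)) (V : Finset ℕ)
    (G : Finset (Finset ℕ)) : Prop :=
  Relation.ReflTransGen BlowupStep (V, G) (W, K)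

/-- The blow-up closure `cl(𝓕)` of a family `𝓕` of `k`-graphs: all `k`-graphs some
blow-up of which is not `𝓕`-free. -/
def blowupClosure (k : ℕ) (𝓕 : Set (Finset ℕ × Finset (Finset ℕ))) :
    Set (Finset ℕ × Finset (Finset ℕ)) :=
  {H | EdgesUniform k H.1 H.2 ∧ ∃ W K, IsBlowupOf W K H.1 H.2 ∧ ¬ IsFree 𝓕 W K}

/-! ### Patterns and `P`-constructions. -/

/-- A pattern `P = (m, E, R)`: a finite index type (playing the role of `[m]`),
a collection `E` of `k`-multisets of indices, and a set `R` of recursive indices. -/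
structure Pattern (k : ℕ) where
  ι : Type
  [fin : Fintype ι]
  [dec : DecidableEq ι]
  E : Finset (Multiset ι)
  E_card : ∀ D ∈ E, Multiset.card D = k
  R : Finset ι

attribute [instance] Pattern.fin Pattern.dec

variable {k : ℕ}

/-- The profile of a vertex set `X` with respect to the parts `part i`: the multiset
recording each index `i` with multiplicity `|X ∩ part i|`. -/
def profileOf (P : Pattern k) (part : P.ι → Finset ℕ) (X : Finset ℕ) : Multiset P.ι :=
  ∑ i : P.ι, Multiset.replicate ((X ∩ part i).card) i

/-- The blow-up `E((V_1, …, V_m))` of the pattern `P` with respect to the parts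
`part` partitioning `V`: all `k`-subsets of `V` whose profile lies in `P.E`. -/
def blowupEdges (P : Pattern k) (part : P.ι → Finset ℕ) (V : Finset ℕ) :
    Finset (Finset ℕ) :=
  V.powerset.filter fun X => X.card = k ∧ profileOf P part X ∈ P.E

/-- `P`-constructions on a vertex set `V`: either the empty `k`-graph on `V`, or
choose a partition of `V` into parts (with no recursive part equal to all of `V`),
take all blow-up edges, and place an arbitrary `P`-construction inside each
recursive part. -/
inductive IsPConstruction (P : Pattern k) : Finset ℕ → Finset (Finset ℕ) → Prop where
  | empty (V : Finset ℕ) : IsPConstruction P V ∅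
  | step (V : Finset ℕ) (part : P.ι → Finset ℕ) (inner : P.ι → Finset (Finset ℕ))
      (hcov : Finset.univ.biUnion part = V)
      (hdis : ∀ i j : P.ι, i ≠ j → Disjoint (part i) (part j))
      (hne : ∀ i ∈ P.R, part i ≠ V)
      (hrec : ∀ i ∈ P.R, IsPConstruction P (part i) (inner i))
      (h0 : ∀ i ∉ P.R, inner i = ∅) :
      IsPConstruction P V (blowupEdges P part V ∪ Finset.univ.biUnion inner)

/-- `p_n`: the maximum number of edges of a `P`-construction on `n` vertices. -/
noncomputable def pNum (P : Pattern k) (n : ℕ) : ℕ :=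
  sSup {c | ∃ V G, V.card = n ∧ IsPConstruction P V G ∧ G.card = c}

/-- The Lagrangian `Λ_P = lim_{n→∞} p_n / C(n,k)` (expressed via `limsup`, which
equals the limit since the limit exists). -/
noncomputable def patternLagrangian (P : Pattern k) : ℝ :=
  limsup (fun n => (pNum P n : ℝ) / (n.choose k : ℝ)) atTop

/-- The pattern `P − i`, obtained by removing the index `i`: delete `i` from `R` and
delete from `E` all multisets containing `i` (the remaining indices form the subtype
`{j // j ≠ i}`). -/
def Pattern.remove (P : Pattern k) (i : P.ι) : Pattern k where
  ι := {j : P.ι // j ≠ i}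
  fin := inferInstance
  dec := inferInstance
  E := ((P.E.filter fun D => i ∉ D).image fun D =>
          D.filterMap fun j =>
            if h : j ≠ i then some (⟨j, h⟩ : {j : P.ι // j ≠ i}) else none).filter
        fun D => Multiset.card D = k
  E_card := fun D hD => (Finset.mem_filter.mp hD).2
  R := P.R.subtype fun j => j ≠ i

/-- `P` is minimal if removing any index strictly decreases the Lagrangian. -/
def Pattern.Minimal (P : Pattern k) : Prop :=
  ∀ i : P.ι, patternLagrangian (P.remove i) < patternLagrangian P

/-- `P` is proper if it is minimal and `0 < Λ_P < 1`. -/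
def Pattern.Proper (P : Pattern k) : Prop :=
  P.Minimal ∧ 0 < patternLagrangian P ∧ patternLagrangian P < 1

/-- `𝓕_∞`: the family of all `k`-graphs that embed into no `P`-construction. -/
def FamInf (P : Pattern k) : Set (Finset ℕ × Finset (Finset ℕ)) :=
  {F | EdgesUniform k F.1 F.2 ∧
    ∀ (W : Finset ℕ) (H : Finset (Finset ℕ)), IsPConstruction P W H → ¬ Embeds F.1 F.2 W H}

/-- `𝓕_s` for `s ∈ ℕ ∪ {∞}`: the members of `𝓕_∞` with at most `s` vertices. -/
def FamBdd (P : Pattern k) (s : ℕ∞) : Set (Finset ℕ × Finset (Finset ℕ)) :=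
  {F | F ∈ FamInf P ∧ (F.1.card : ℕ∞) ≤ s}

/-! ### Lagrange polynomial and optimal vectors. -/

/-- The Lagrange polynomial `λ_E(x) = k! Σ_{D ∈ E} Π_i x_i^{D(i)} / D(i)!`. -/
noncomputable def lagrangePoly (P : Pattern k) (x : P.ι → ℝ) : ℝ :=
  (Nat.factorial k : ℝ) *
    ∑ D ∈ P.E, ∏ i : P.ι, x i ^ D.count i / (Nat.factorial (D.count i) : ℝ)

/-- The function `f(x) = λ_E(x) + Λ_P · Σ_{i ∈ R} x_i^k`. -/
noncomputable def patternAux (P : Pattern k) (x : P.ι → ℝ) : ℝ :=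
  lagrangePoly P x + patternLagrangian P * ∑ i ∈ P.R, x i ^ k

/-- An optimal vector: a point of `Δ_m^*` (the simplex with no coordinate equal to 1)
satisfying `Λ_P = λ_E(x) + Λ_P Σ_{i∈R} x_i^k`. -/
def IsOptimalVec (P : Pattern k) (x : P.ι → ℝ) : Prop :=
  x ∈ stdSimplex ℝ P.ι ∧ (∀ i, x i < 1) ∧ patternLagrangian P = patternAux P x

/-- The link `E_i` of an index `i`: all multisets `A` with `i ::ₘ A ∈ E`. -/
def patternLink (P : Pattern k) (i : P.ι) : Set (Multiset P.ι) :=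
  {A | i ::ₘ A ∈ P.E}

/-! ### Bottom partitions, rigidity and closeness. -/

/-- `(V, G)` is a `P`-construction whose bottom partition is `part`. -/
def IsPConstructionWith (P : Pattern k) (V : Finset ℕ) (part : P.ι → Finset ℕ)
    (G : Finset (Finset ℕ)) : Prop :=
  Finset.univ.biUnion part = V ∧ (∀ i j : P.ι, i ≠ j → Disjoint (part i) (part j)) ∧
  (∀ i ∈ P.R, part i ≠ V) ∧
  ∃ inner : P.ι → Finset (Finset ℕ),
    (∀ i ∈ P.R, IsPConstruction P (part i) (inner i)) ∧ (∀ i ∉ P.R, inner i = ∅) ∧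
    G = blowupEdges P part V ∪ Finset.univ.biUnion inner

/-- An automorphism of the pattern `P`: a permutation of indices preserving `R` and `E`. -/
def IsPatternAutomorphism (P : Pattern k) (h : Equiv.Perm P.ι) : Prop :=
  P.R.image h = P.R ∧ P.E.image (Multiset.map h) = P.E

/-- The `P`-construction `(V, G)` with bottom partition `part` is rigid: any embedding
`f` into a `P`-construction `(W, H)` with bottom partition `upart`, whose image meets
at least two distinct parts `upart i`, follows some automorphism of `P` on whole parts. -/
def RigidConstruction (P : Pattern k) (V : Finset ℕ) (part : P.ι → Finset ℕ)
    (G : Finset (Finset ℕ)) : Prop :=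
  ∀ (W : Finset ℕ) (H : Finset (Finset ℕ)) (upart : P.ι → Finset ℕ),
    IsPConstructionWith P W upart H →
    ∀ f : ℕ → ℕ,
      Set.InjOn f V → (∀ v ∈ V, f v ∈ W) → (∀ e ∈ G, e.image f ∈ H) →
      (∃ i j : P.ι, i ≠ j ∧ (∃ u ∈ V, f u ∈ upart i) ∧ ∃ v ∈ V, f v ∈ upart j) →
      ∃ h : Equiv.Perm P.ι, IsPatternAutomorphism P h ∧
        ∀ i : P.ι, ∀ v ∈ part i, f v ∈ upart (h i)

/-- `(V, G)` is `s`-close to some `P`-construction: after relabelling the vertices of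
`G` by an injection, some `P`-construction on the same vertex set differs from it in
at most `s` edges. -/
def CloseToPConstruction (P : Pattern k) (s : ℝ) (V : Finset ℕ)
    (G : Finset (Finset ℕ)) : Prop :=
  ∃ (V' : Finset ℕ) (G' : Finset (Finset ℕ)) (f : ℕ → ℕ),
    IsPConstruction P V' G' ∧ Set.InjOn f V ∧ V.image f = V' ∧
    ((symmDiff (G.image fun e => e.image f) G').card : ℝ) ≤ s


/-! Deleting a vertex passes to a subgraph, so only cloning `x` into a new vertex `y` needs an
argument. Let `F ∈ 𝓕_s` embed into the clone of `G`. If the embedding misses `y`, `F` embeds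
into `G`. Otherwise fold `y` back onto `x`: the image is a vertex set `S` of `G` with at most
`|F|` vertices, and `F` embeds into the clone of the induced subgraph `G[S]`. As `G` is
`𝓕_s`-free, `G[S]` embeds into some `P`-construction. But a clone of a `P`-construction is a
subgraph of a `P`-construction (put `y` next to `x` in its part, at every level of the
recursion), so `F` would embed into a `P`-construction. -/

lemma Embeds.of_subset {V₁ V₂ : Finset ℕ} {G₁ G₂ : Finset (Finset ℕ)} (hV : V₁ ⊆ V₂)
    (hG : G₁ ⊆ G₂) : Embeds V₁ G₁ V₂ G₂ :=
  ⟨id, Set.injOn_id _, fun _ hv => hV hv, fun e he => by rw [Finset.image_id]; exact hG he⟩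

lemma Embeds.trans {V₁ V₂ V₃ : Finset ℕ} {G₁ G₂ G₃ : Finset (Finset ℕ)}
    (h₁₂ : Embeds V₁ G₁ V₂ G₂) (h₂₃ : Embeds V₂ G₂ V₃ G₃) : Embeds V₁ G₁ V₃ G₃ := by
  obtain ⟨f, hf, hfV, hfG⟩ := h₁₂
  obtain ⟨g, hg, hgV, hgG⟩ := h₂₃
  refine ⟨g ∘ f, hg.comp hf fun v hv => hfV v hv, fun v hv => hgV _ (hfV v hv), fun e he => ?_⟩
  rw [← Finset.image_image]
  exact hgG _ (hfG e he)

lemma IsFree.of_embeds {𝓕 : Set (Finset ℕ × Finset (Finset ℕ))} {V₁ V₂ : Finset ℕ}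
    {G₁ G₂ : Finset (Finset ℕ)} (hfree : IsFree 𝓕 V₂ G₂) (h : Embeds V₁ G₁ V₂ G₂) :
    IsFree 𝓕 V₁ G₁ :=
  fun F hF hF₁ => hfree F hF (hF₁.trans h)

lemma Finset.image_erase_of_injOn {α β : Type*} [DecidableEq α] [DecidableEq β] {f : α → β}
    {s : Finset α} {a : α} (hf : Set.InjOn f s)
    (ha : a ∈ s) : (s.erase a).image f = (s.image f).erase (f a) := by
  rw [← Finset.sdiff_singleton_eq_erase, ← Finset.sdiff_singleton_eq_erase,
    Finset.image_sdiff_of_injOn hf (Finset.singleton_subset_iff.mpr ha), Finset.image_singleton]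

lemma Set.injOn_update_id {α : Type*} [DecidableEq α] {s : Set α} {x y : α} (hy : y ∉ s) :
    Set.InjOn (Function.update id x y) s := by
  intro a ha b hb hab
  by_cases hax : a = x <;> by_cases hbx : b = x <;>
    simp_all [Function.update_of_ne]

section Clone

variable {G H : Finset (Finset ℕ)} {e : Finset ℕ} {x y : ℕ}

/-- The edge set produced by `BlowupStep.clone`. -/
def cloneEdges (G : Finset (Finset ℕ)) (x y : ℕ) : Finset (Finset ℕ) :=
  G ∪ (G.filter fun e => x ∈ e).image fun e => insert y (e.erase x)

lemma mem_cloneEdges :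
    e ∈ cloneEdges G x y ↔ e ∈ G ∨ ∃ g ∈ G, x ∈ g ∧ insert y (g.erase x) = e := by
  simp [cloneEdges, and_assoc]

lemma cloneEdges_subset (hG : G ⊆ H) (hclone : ∀ e ∈ G, x ∈ e → insert y (e.erase x) ∈ H) :
    cloneEdges G x y ⊆ H := by
  intro e he
  rcases mem_cloneEdges.mp he with he | ⟨g, hg, hxg, rfl⟩
  exacts [hG he, hclone g hg hxg]

lemma subset_cloneEdges : G ⊆ cloneEdges G x y := Finset.subset_union_left

lemma cloneEdges_eq_self (hx : ∀ e ∈ G, x ∉ e) : cloneEdges G x y = G :=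
  (cloneEdges_subset subset_rfl fun e he hxe => absurd hxe (hx e he)).antisymm subset_cloneEdges

lemma cloneEdges_union {G₁ G₂ : Finset (Finset ℕ)} :
    cloneEdges (G₁ ∪ G₂) x y = cloneEdges G₁ x y ∪ cloneEdges G₂ x y := by
  ext e
  simp only [mem_cloneEdges, Finset.mem_union]
  grind

lemma cloneEdges_biUnion {ι : Type*} {s : Finset ι} {t : ι → Finset (Finset ℕ)} :
    cloneEdges (s.biUnion t) x y = s.biUnion fun i => cloneEdges (t i) x y := by
  ext e
  simp only [mem_cloneEdges, Finset.mem_biUnion]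
  grind

lemma mem_of_mem_cloneEdges (he : e ∈ cloneEdges G x y) (hy : y ∉ e) : e ∈ G := by
  rcases mem_cloneEdges.mp he with he | ⟨g, -, -, rfl⟩
  exacts [he, absurd (Finset.mem_insert_self y _) hy]

lemma image_update_id_eq_insert_erase (hx : x ∈ e) :
    e.image (Function.update id x y) = insert y (e.erase x) := by
  conv_lhs => rw [← Finset.insert_erase hx]
  rw [Finset.image_insert, Function.update_self,
    Finset.image_congr fun a ha => Function.update_of_ne (Finset.ne_of_mem_erase ha) y id,
    Finset.image_id]

end Clone

lemma IsPConstruction.edgesUniform {P : Pattern k} {V : Finset ℕ} {G : Finset (Finset ℕ)}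
    (h : IsPConstruction P V G) : EdgesUniform k V G := by
  induction h with
  | empty V => simp [EdgesUniform]
  | step V part inner hcov hdis hne hrec h0 ih =>
    intro e he
    rcases Finset.mem_union.mp he with he | he
    · simp only [blowupEdges, Finset.mem_filter, Finset.mem_powerset] at he
      exact ⟨he.1, he.2.1⟩
    · obtain ⟨i, -, hi⟩ := Finset.mem_biUnion.mp he
      by_cases hiR : i ∈ P.R
      · obtain ⟨hsub, hcard⟩ := ih i hiR e hi
        exact ⟨hsub.trans (hcov ▸ Finset.subset_biUnion_of_mem part (Finset.mem_univ i)), hcard⟩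
      · simp [h0 i hiR] at hi

lemma image_mem_blowupEdges {P : Pattern k} {part part' : P.ι → Finset ℕ} {V V' : Finset ℕ}
    {σ : ℕ → ℕ} (hσ : Set.InjOn σ V) (hσV : ∀ v ∈ V, σ v ∈ V')
    (hσpart : ∀ v ∈ V, ∀ i, σ v ∈ part' i ↔ v ∈ part i) {e : Finset ℕ}
    (he : e ∈ blowupEdges P part V) : e.image σ ∈ blowupEdges P part' V' := by
  simp only [blowupEdges, Finset.mem_filter, Finset.mem_powerset] at he ⊢
  obtain ⟨heV, hcard, hprofile⟩ := he
  have hinter : ∀ i, e.image σ ∩ part' i = (e ∩ part i).image σ := fun i => by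
    ext w
    simp only [Finset.mem_inter, Finset.mem_image]
    constructor
    · rintro ⟨⟨v, hv, rfl⟩, hw⟩
      exact ⟨v, ⟨hv, (hσpart v (heV hv) i).mp hw⟩, rfl⟩
    · rintro ⟨v, ⟨hv, hvi⟩, rfl⟩
      exact ⟨⟨v, hv, rfl⟩, (hσpart v (heV hv) i).mpr hvi⟩
  refine ⟨Finset.image_subset_iff.mpr fun v hv => hσV v (heV hv), ?_, ?_⟩
  · rwa [Finset.card_image_of_injOn (hσ.mono heV)]
  · convert hprofile using 1
    refine Finset.sum_congr rfl fun i _ => ?_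
    rw [hinter, Finset.card_image_of_injOn (hσ.mono (Finset.inter_subset_left.trans heV))]

section InsertIntoPart

variable {ι : Type*} [DecidableEq ι] {part : ι → Finset ℕ} {i₀ i : ι} {V : Finset ℕ} {v y : ℕ}

lemma mem_update_insert_iff :
    v ∈ Function.update part i₀ (insert y (part i₀)) i ↔ (v = y ∧ i = i₀) ∨ v ∈ part i := by
  by_cases h : i = i₀
  · subst h; simp
  · simp [h]

lemma biUnion_update_insert [Fintype ι] :
    Finset.univ.biUnion (Function.update part i₀ (insert y (part i₀))) =
      insert y (Finset.univ.biUnion part) := by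
  ext v
  simp only [Finset.mem_biUnion, Finset.mem_univ, true_and, mem_update_insert_iff,
    Finset.mem_insert]
  grind

lemma disjoint_update_insert (hdis : ∀ i j, i ≠ j → Disjoint (part i) (part j))
    (hy : ∀ i, y ∉ part i) {j : ι} (hij : i ≠ j) :
    Disjoint (Function.update part i₀ (insert y (part i₀)) i)
      (Function.update part i₀ (insert y (part i₀)) j) := by
  rw [Finset.disjoint_left]
  intro v hvi hvj
  rw [mem_update_insert_iff] at hvi hvj
  rcases hvi with ⟨rfl, rfl⟩ | hvi
  · rcases hvj with ⟨-, rfl⟩ | hvj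
    exacts [hij rfl, hy j hvj]
  · rcases hvj with ⟨rfl, -⟩ | hvj
    exacts [hy i hvi, Finset.disjoint_left.mp (hdis i j hij) hvi hvj]

lemma update_insert_ne (hne : part i ≠ V) (hyi : y ∉ part i) (hy : y ∉ V) :
    Function.update part i₀ (insert y (part i₀)) i ≠ insert y V := by
  intro heq
  by_cases h : i = i₀
  · subst h
    rw [Function.update_self] at heq
    exact hne (by simpa [hyi, hy] using congrArg (Finset.erase · y) heq)
  · rw [Function.update_of_ne h] at heq
    exact hyi (heq ▸ Finset.mem_insert_self y V)

end InsertIntoPart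

lemma cloneEdges_blowupEdges_subset {P : Pattern k} {part : P.ι → Finset ℕ} {V : Finset ℕ}
    {i₀ : P.ι} {x y : ℕ} (hcov : Finset.univ.biUnion part = V)
    (hdis : ∀ i j, i ≠ j → Disjoint (part i) (part j)) (hx : x ∈ part i₀) (hy : y ∉ V) :
    cloneEdges (blowupEdges P part V) x y ⊆
      blowupEdges P (Function.update part i₀ (insert y (part i₀))) (insert y V) := by
  have hV : ∀ v ∈ V, v ≠ y := fun v hv h => hy (h ▸ hv)
  have hyi : ∀ i, y ∉ part i := fun i hyi =>
    hy (hcov ▸ Finset.mem_biUnion.mpr ⟨i, Finset.mem_univ i, hyi⟩)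
  have hxi : ∀ i, x ∈ part i ↔ i = i₀ := fun i =>
    ⟨fun hxi => by_contra fun h => Finset.disjoint_left.mp (hdis i i₀ h) hxi hx, (· ▸ hx)⟩
  refine cloneEdges_subset (fun e he => ?_) (fun e he hxe => ?_)
  · simpa using image_mem_blowupEdges (σ := id) (Set.injOn_id _)
      (fun v hv => Finset.mem_insert_of_mem hv)
      (fun v hv i => by simp [mem_update_insert_iff, hV v hv]) he
  · rw [← image_update_id_eq_insert_erase hxe]
    refine image_mem_blowupEdges (Set.injOn_update_id hy) (fun v hv => ?_) (fun v hv i => ?_) he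
    all_goals
      by_cases hvx : v = x
      · subst hvx; simp [mem_update_insert_iff, hxi, hyi]
      · simp [Function.update_of_ne hvx, mem_update_insert_iff, hV v hv, hv]

lemma IsPConstruction.exists_cloneEdges_subset {P : Pattern k} {U : Finset ℕ}
    {H : Finset (Finset ℕ)} (hH : IsPConstruction P U H) {x y : ℕ} (hx : x ∈ U) (hy : y ∉ U) :
    ∃ H', IsPConstruction P (insert y U) H' ∧ cloneEdges H x y ⊆ H' := by
  induction hH with
  | empty V => exact ⟨∅, .empty _, by simp [cloneEdges]⟩
  | step V part inner hcov hdis hne hrec h0 ih =>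
    obtain ⟨i₀, -, hxi₀⟩ := Finset.mem_biUnion.mp (hcov ▸ hx)
    have hyi : ∀ i, y ∉ part i := fun i hyi =>
      hy (hcov ▸ Finset.mem_biUnion.mpr ⟨i, Finset.mem_univ i, hyi⟩)
    set part' := Function.update part i₀ (insert y (part i₀))
    have hinner : ∀ i, ∃ I, (i ∈ P.R → IsPConstruction P (part' i) I) ∧ (i ∉ P.R → I = ∅) ∧
        cloneEdges (inner i) x y ⊆ I := by
      intro i
      by_cases hiR : i ∈ P.R
      · by_cases hi : i = i₀
        · subst hi
          obtain ⟨I, hI, hsub⟩ := ih i hiR hxi₀ (hyi i)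
          exact ⟨I, fun _ => by simpa [part'] using hI, absurd hiR, hsub⟩
        · have hx : ∀ e ∈ inner i, x ∉ e := fun e he hxe => Finset.disjoint_left.mp
            (hdis i i₀ hi) (((hrec i hiR).edgesUniform e he).1 hxe) hxi₀
          refine ⟨inner i, fun _ => ?_, absurd hiR, (cloneEdges_eq_self hx).subset⟩
          simpa [part', Function.update_of_ne hi] using hrec i hiR
      · exact ⟨∅, fun h => absurd h hiR, fun _ => rfl, by simp [h0 i hiR, cloneEdges]⟩
    choose inner' hrec' h0' hsub using hinner
    refine ⟨_, .step _ part' inner' (hcov ▸ biUnion_update_insert)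
      (fun i j => disjoint_update_insert hdis hyi)
      (fun i hi => update_insert_ne (hne i hi) (hyi i) hy) hrec' h0', ?_⟩
    rw [cloneEdges_union, cloneEdges_biUnion]
    exact Finset.union_subset_union (cloneEdges_blowupEdges_subset hcov hdis hxi₀ hy)
      (Finset.biUnion_mono fun i _ => hsub i)

lemma Embeds.clone {A B : Finset ℕ} {GA GB : Finset (Finset ℕ)} (h : Embeds A GA B GB)
    (hGA : ∀ e ∈ GA, e ⊆ A) {x y z : ℕ} (hx : x ∈ A) (hy : y ∉ A) (hz : z ∉ B) :
    ∃ x' ∈ B, Embeds (insert y A) (cloneEdges GA x y) (insert z B) (cloneEdges GB x' z) := by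
  obtain ⟨φ, hφ, hφB, hφG⟩ := h
  set ψ := Function.update φ y z
  have hψ : ∀ v ∈ A, ψ v = φ v := fun v hv => Function.update_of_ne (ne_of_mem_of_not_mem hv hy) _ _
  have hψy : ψ y = z := Function.update_self _ _ _
  refine ⟨φ x, hφB x hx, ψ, ?_, fun v hv => ?_, fun e he => ?_⟩
  · rw [Finset.coe_insert, Set.injOn_insert (by exact hy)]
    refine ⟨hφ.congr fun v hv => (hψ v hv).symm, ?_⟩
    rintro ⟨v, hv, hvz⟩
    exact hz (by rw [← hψy, ← hvz, hψ v hv]; exact hφB v hv)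
  · rcases Finset.mem_insert.mp hv with rfl | hv
    · exact hψy ▸ Finset.mem_insert_self z B
    · exact Finset.mem_insert_of_mem (hψ v hv ▸ hφB v hv)
  · rcases mem_cloneEdges.mp he with he | ⟨g, hg, hxg, rfl⟩
    · rw [Finset.image_congr fun v hv => hψ v (hGA e he hv)]
      exact subset_cloneEdges (hφG e he)
    · rw [Finset.image_insert, hψy,
        Finset.image_congr fun v hv => hψ v (hGA g hg (Finset.mem_of_mem_erase hv)),
        Finset.image_erase_of_injOn (hφ.mono (hGA g hg)) hxg]
      exact mem_cloneEdges.mpr (Or.inr ⟨_, hφG g hg, Finset.mem_image_of_mem φ hxg, rfl⟩)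

lemma IsPConstruction.exists_embeds_cloneEdges {P : Pattern k} {W S : Finset ℕ}
    {H GS : Finset (Finset ℕ)} (hW : IsPConstruction P W H) (h : Embeds S GS W H)
    (hGS : ∀ e ∈ GS, e ⊆ S) {x y : ℕ} (hx : x ∈ S) (hy : y ∉ S) :
    ∃ W' H', IsPConstruction P W' H' ∧ Embeds (insert y S) (cloneEdges GS x y) W' H' := by
  obtain ⟨z, hz⟩ := Infinite.exists_notMem_finset W
  obtain ⟨x', hx', hclone⟩ := h.clone hGS hx hy hz
  obtain ⟨H', hH', hsub⟩ := hW.exists_cloneEdges_subset hx' hz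
  exact ⟨_, H', hH', hclone.trans (Embeds.of_subset subset_rfl hsub)⟩

lemma mem_cloneEdges_filter_subset {G : Finset (Finset ℕ)} {S e : Finset ℕ} {x y : ℕ}
    (hGy : ∀ g ∈ G, y ∉ g) (hxS : x ∈ S) (he : e ∈ cloneEdges G x y) (heS : e ⊆ insert y S) :
    e ∈ cloneEdges (G.filter (· ⊆ S)) x y := by
  rcases mem_cloneEdges.mp he with he | ⟨g, hg, hxg, rfl⟩
  · refine subset_cloneEdges (Finset.mem_filter.mpr ⟨he, fun v hv => ?_⟩)
    exact (Finset.mem_insert.mp (heS hv)).resolve_left fun h => hGy e he (h ▸ hv)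
  · refine mem_cloneEdges.mpr (Or.inr ⟨g, Finset.mem_filter.mpr ⟨hg, fun v hv => ?_⟩, hxg, rfl⟩)
    by_cases hvx : v = x
    · exact hvx ▸ hxS
    · have hv' := heS (Finset.mem_insert_of_mem (Finset.mem_erase.mpr ⟨hvx, hv⟩))
      exact (Finset.mem_insert.mp hv').resolve_left fun h => hGy g hg (h ▸ hv)

lemma EdgesUniform.clone {V : Finset ℕ} {G : Finset (Finset ℕ)} (hG : EdgesUniform k V G)
    {x y : ℕ} (hy : y ∉ V) : EdgesUniform k (insert y V) (cloneEdges G x y) := by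
  intro e he
  rcases mem_cloneEdges.mp he with he | ⟨g, hg, hxg, rfl⟩
  · exact ⟨(hG e he).1.trans (Finset.subset_insert y V), (hG e he).2⟩
  · refine ⟨Finset.insert_subset_insert y ((Finset.erase_subset x g).trans (hG g hg).1), ?_⟩
    rw [← image_update_id_eq_insert_erase hxg,
      Finset.card_image_of_injOn ((Set.injOn_update_id hy).mono (hG g hg).1), (hG g hg).2]

lemma exists_fold_of_mapsTo_insert {A V : Finset ℕ} {f : ℕ → ℕ} {x y : ℕ} (hx : x ∈ V)
    (hfV : ∀ v ∈ A, f v ∈ insert y V) (hyf : ∃ v ∈ A, f v = y) :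
    ∃ S ⊆ V, x ∈ S ∧ S.card ≤ A.card ∧ ∀ v ∈ A, f v ∈ insert y S := by
  refine ⟨(A.image f).image (Function.update id y x), ?_, ?_,
    Finset.card_image_le.trans Finset.card_image_le, fun v hv => ?_⟩
  · simp only [Finset.image_image, Finset.image_subset_iff]
    intro v hv
    by_cases hvy : f v = y
    · simpa [hvy] using hx
    · simpa [hvy] using (Finset.mem_insert.mp (hfV v hv)).resolve_left hvy
  · obtain ⟨v, hv, hvy⟩ := hyf
    exact Finset.mem_image.mpr ⟨y, hvy ▸ Finset.mem_image_of_mem f hv, Function.update_self _ _ _⟩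
  · by_cases hvy : f v = y
    · simp [hvy]
    · refine Finset.mem_insert_of_mem (Finset.mem_image.mpr ⟨f v, Finset.mem_image_of_mem f hv, ?_⟩)
      simp [hvy]

lemma IsFree.clone {P : Pattern k} {s : ℕ∞} {V : Finset ℕ} {G : Finset (Finset ℕ)}
    (hG : EdgesUniform k V G) (hfree : IsFree (FamBdd P s) V G) {x y : ℕ} (hx : x ∈ V)
    (hy : y ∉ V) : IsFree (FamBdd P s) (insert y V) (cloneEdges G x y) := by
  rintro ⟨FV, FE⟩ ⟨⟨hFunif, hFnoP⟩, hFcard⟩ ⟨f, hf, hfV, hfE⟩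
  by_cases hyf : ∃ v ∈ FV, f v = y
  · obtain ⟨S, hSV, hxS, hScard, hfS⟩ := exists_fold_of_mapsTo_insert hx hfV hyf
    set GS := G.filter (· ⊆ S)
    have hGS : EdgesUniform k S GS := fun e he =>
      ⟨(Finset.mem_filter.mp he).2, (hG e (Finset.mem_filter.mp he).1).2⟩
    have hFclone : Embeds FV FE (insert y S) (cloneEdges GS x y) :=
      ⟨f, hf, hfS, fun e he => mem_cloneEdges_filter_subset (fun g hg hyg => hy ((hG g hg).1 hyg))
        hxS (hfE e he) (Finset.image_subset_iff.mpr fun v hv => hfS v ((hFunif e he).1 hv))⟩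
    refine hfree (S, GS) ⟨⟨hGS, fun W H hWH hemb => ?_⟩, le_trans (Nat.cast_le.mpr hScard) hFcard⟩
      (Embeds.of_subset hSV (Finset.filter_subset _ G))
    obtain ⟨W', H', hP, hclone⟩ :=
      hWH.exists_embeds_cloneEdges hemb (fun e he => (hGS e he).1) hxS (fun h => hy (hSV h))
    exact hFnoP W' H' hP (hFclone.trans hclone)
  · push Not at hyf
    refine hfree (FV, FE) ⟨⟨hFunif, hFnoP⟩, hFcard⟩ ⟨f, hf, fun v hv => ?_, fun e he => ?_⟩
    · exact (Finset.mem_insert.mp (hfV v hv)).resolve_left (hyf v hv)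
    · refine mem_of_mem_cloneEdges (hfE e he) ?_
      simp only [Finset.mem_image, not_exists, not_and]
      exact fun v hv => hyf v ((hFunif e he).1 hv)

lemma BlowupStep.edgesUniform_and_isFree {P : Pattern k} {s : ℕ∞}
    {p q : Finset ℕ × Finset (Finset ℕ)} (hstep : BlowupStep p q)
    (h : EdgesUniform k p.1 p.2 ∧ IsFree (FamBdd P s) p.1 p.2) :
    EdgesUniform k q.1 q.2 ∧ IsFree (FamBdd P s) q.1 q.2 := by
  obtain ⟨hG, hfree⟩ := h
  cases hstep with
  | clone V G x y hx hy => exact ⟨hG.clone hy, hfree.clone hG hx hy⟩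
  | delete V G x _ =>
    refine ⟨fun e he => ?_,
      hfree.of_embeds (Embeds.of_subset (Finset.erase_subset x V) (Finset.filter_subset _ G))⟩
    obtain ⟨heG, hxe⟩ := Finset.mem_filter.mp he
    exact ⟨Finset.subset_erase.mpr ⟨(hG e heG).1, hxe⟩, (hG e heG).2⟩

theorem blowup_of_free_is_free_general (k : ℕ) (P : Pattern k) (s : ℕ∞)
    (V : Finset ℕ) (G : Finset (Finset ℕ)) (hG : EdgesUniform k V G)
    (hfree : IsFree (FamBdd P s) V G)
    (W : Finset ℕ) (K : Finset (Finset ℕ)) (h : IsBlowupOf W K V G) :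
    IsFree (FamBdd P s) W K := by
  suffices ∀ q, Relation.ReflTransGen BlowupStep (V, G) q →
      EdgesUniform k q.1 q.2 ∧ IsFree (FamBdd P s) q.1 q.2 from (this (W, K) h).2
  intro q hq
  induction hq with
  | refl => exact ⟨hG, hfree⟩
  | tail _ hstep ih => exact hstep.edgesUniform_and_isFree ih

/-- For `s ∈ ℕ ∪ {∞}`, if a `k`-graph `G` is `𝓕_s`-free then every
blow-up of `G` is `𝓕_s`-free. -/
theorem blowup_of_free_is_free (k : ℕ) (hk : 0 < k) (P : Pattern k) (s : ℕ∞)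
    (V : Finset ℕ) (G : Finset (Finset ℕ)) (hG : EdgesUniform k V G)
    (hfree : IsFree (FamBdd P s) V G)
    (W : Finset ℕ) (K : Finset (Finset ℕ)) (h : IsBlowupOf W K V G) :
    IsFree (FamBdd P s) W K :=
  blowup_of_free_is_free_general k P s V G hG hfree W K h
end

section
/- Let P = (m,E,R) be a pattern of k-multisets and let s ∈ ℕ ∪ {∞}. Let G be a k-graph on a vertex set V = V_1 ∪ … ∪ V_m obtained by taking all edges of the blow-up E((V_1,…,V_m)) and placing an arbitrary F_s-free k-graph inside each part V_i with i ∈ R. Then G is F_s-free. -/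
open Filter Finset

variable {k : ℕ}

/-!
Suppose `F ∈ 𝓕_s` embeds into the compound graph. For `i ∈ R` the part `F_i` of `F` mapped
into `V_i`, with the edges mapped into the inner graph there, has at most `s` vertices and
embeds into an `𝓕_s`-free graph, so it is not in `𝓕_∞`: it embeds into a `P`-construction
`H_i`. Taking disjoint copies of the `H_i` (and of the vertex sets `F_i` for `i ∉ R`) as the
parts of a new `P`-construction, the embedding preserves the profiles of the blow-up edges of
`F`, so `F` embeds into a `P`-construction, a contradiction. Each copy is chosen nonempty
(possible as `k > 0`), so that no recursive part is the whole vertex set.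
-/

lemma card_image_inter_eq_card_filter {f : ℕ → ℕ} {X : Finset ℕ} (hf : Set.InjOn f X)
    (A : Finset ℕ) : (X.image f ∩ A).card = (X.filter fun v => f v ∈ A).card := by
  rw [← filter_mem_eq_inter, filter_image,
    card_image_of_injOn (hf.mono (coe_subset.mpr (filter_subset _ _)))]

lemma profileOf_image {P : Pattern k} {part part' : P.ι → Finset ℕ} {X : Finset ℕ}
    {f : ℕ → ℕ} (hf : Set.InjOn f X) (hmem : ∀ v ∈ X, ∀ i, f v ∈ part' i ↔ v ∈ part i) :
    profileOf P part' (X.image f) = profileOf P part X := by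
  refine sum_congr rfl fun i _ => ?_
  rw [card_image_inter_eq_card_filter hf, ← filter_mem_eq_inter,
    filter_congr fun v hv => hmem v hv i]

lemma image_mem_blowupEdges_iff {P : Pattern k} {part part' : P.ι → Finset ℕ}
    {V V' X : Finset ℕ} {f : ℕ → ℕ} (hXV : X ⊆ V) (hfV : ∀ v ∈ X, f v ∈ V')
    (hf : Set.InjOn f X) (hmem : ∀ v ∈ X, ∀ i, f v ∈ part' i ↔ v ∈ part i) :
    X.image f ∈ blowupEdges P part' V' ↔ X ∈ blowupEdges P part V := by
  have hfXV : X.image f ⊆ V' := image_subset_iff.mpr hfV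
  simp only [blowupEdges, mem_filter, mem_powerset, card_image_of_injOn hf,
    profileOf_image hf hmem, hXV, hfXV, true_and]

lemma blowupEdges_image (P : Pattern k) (part : P.ι → Finset ℕ) (V : Finset ℕ)
    {ψ : ℕ → ℕ} (hψ : Function.Injective ψ) :
    blowupEdges P (fun i => (part i).image ψ) (V.image ψ)
      = (blowupEdges P part V).image (image ψ) := by
  have hmem : ∀ v i, ψ v ∈ (part i).image ψ ↔ v ∈ part i := fun _ _ => hψ.mem_finset_image
  have himage_iff : ∀ X ⊆ V, X.image ψ ∈ blowupEdges P (fun i => (part i).image ψ) (V.image ψ)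
      ↔ X ∈ blowupEdges P part V := fun X hX =>
    image_mem_blowupEdges_iff hX (fun v hv => mem_image_of_mem ψ (hX hv)) hψ.injOn
      fun v _ i => hmem v i
  ext Y
  constructor
  · intro hY
    obtain ⟨X, hXV, rfl⟩ : ∃ X ⊆ V, X.image ψ = Y :=
      subset_image_iff.mp (mem_powerset.mp (mem_filter.mp hY).1)
    exact mem_image_of_mem _ ((himage_iff X hXV).mp hY)
  · intro hY
    obtain ⟨X, hX, rfl⟩ := mem_image.mp hY
    exact (himage_iff X (mem_powerset.mp (mem_filter.mp hX).1)).mpr hX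

lemma IsPConstruction.image {P : Pattern k} {V : Finset ℕ} {G : Finset (Finset ℕ)}
    (h : IsPConstruction P V G) {ψ : ℕ → ℕ} (hψ : Function.Injective ψ) :
    IsPConstruction P (V.image ψ) (G.image (image ψ)) := by
  induction h with
  | empty V => simpa using IsPConstruction.empty (P := P) (V.image ψ)
  | step V part inner hcov hdis hne hrec h0 ih =>
    rw [image_union, ← blowupEdges_image P part V hψ, biUnion_image]
    refine IsPConstruction.step _ _ _ ?_ ?_ ?_ ih ?_
    · rw [← hcov, biUnion_image]
    · exact fun i j hij => (disjoint_image hψ).mpr (hdis i j hij)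
    · exact fun i hi heq => hne i hi (image_injective hψ heq)
    · intro i hi
      rw [h0 i hi, image_empty]

lemma embeds_image (V : Finset ℕ) (G : Finset (Finset ℕ)) {ψ : ℕ → ℕ}
    (hψ : Function.Injective ψ) : Embeds V G (V.image ψ) (G.image (image ψ)) :=
  ⟨ψ, hψ.injOn, fun _ hv => mem_image_of_mem ψ hv, fun _ he => mem_image_of_mem _ he⟩

lemma EdgesUniform.filter_preimage {V : Finset ℕ} {G : Finset (Finset ℕ)}
    (hG : EdgesUniform k V G) {A : Finset ℕ} {B : Finset (Finset ℕ)}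
    (hB : EdgesUniform k A B) (f : ℕ → ℕ) :
    EdgesUniform k (V.filter fun v => f v ∈ A) (G.filter fun e => e.image f ∈ B) := by
  intro e he
  obtain ⟨heG, hfe⟩ := mem_filter.mp he
  refine ⟨fun v hv => mem_filter.mpr ⟨(hG e heG).1 hv, ?_⟩, (hG e heG).2⟩
  exact (hB _ hfe).1 (mem_image_of_mem f hv)

lemma embeds_filter_preimage {V : Finset ℕ} (G : Finset (Finset ℕ)) {f : ℕ → ℕ}
    (hf : Set.InjOn f V) (A : Finset ℕ) (B : Finset (Finset ℕ)) :
    Embeds (V.filter fun v => f v ∈ A) (G.filter fun e => e.image f ∈ B) A B :=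
  ⟨f, hf.mono (coe_subset.mpr (filter_subset _ _)), fun _ hv => (mem_filter.mp hv).2,
    fun _ he => (mem_filter.mp he).2⟩

def EmbedsInPConstruction (P : Pattern k) (V : Finset ℕ) (G : Finset (Finset ℕ)) : Prop :=
  ∃ W H, IsPConstruction P W H ∧ Embeds V G W H

lemma EmbedsInPConstruction.exists_nonempty {P : Pattern k} {V : Finset ℕ}
    {G : Finset (Finset ℕ)} (hk : 0 < k) (hG : EdgesUniform k V G)
    (h : EmbedsInPConstruction P V G) :
    ∃ W H, IsPConstruction P W H ∧ W.Nonempty ∧ Embeds V G W H := by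
  obtain ⟨W, H, hWH, f, hf, hfW, hfH⟩ := h
  rcases W.eq_empty_or_nonempty with rfl | hW
  · have hV : V = ∅ := eq_empty_of_forall_notMem fun v hv => notMem_empty _ (hfW v hv)
    have hG' : G = ∅ := eq_empty_of_forall_notMem fun e he => by
      obtain ⟨he, hcard⟩ := hG e he
      rw [hV, subset_empty] at he
      subst he
      exact hk.ne (card_empty.symm.trans hcard)
    subst hV hG'
    exact ⟨{0}, ∅, .empty _, singleton_nonempty 0, id, by simp, by simp, by simp⟩
  · exact ⟨W, H, hWH, hW, f, hf, hfW, hfH⟩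

def compoundEdges (P : Pattern k) (part : P.ι → Finset ℕ) (inner : P.ι → Finset (Finset ℕ)) :
    Finset (Finset ℕ) :=
  blowupEdges P part (univ.biUnion part) ∪ univ.biUnion inner

lemma isPConstruction_compoundEdges {P : Pattern k} {part : P.ι → Finset ℕ}
    {inner : P.ι → Finset (Finset ℕ)} (hdis : ∀ i j : P.ι, i ≠ j → Disjoint (part i) (part j))
    (hpart : ∀ i, (part i).Nonempty) (hR : ∀ i ∈ P.R, ∃ j, j ≠ i)
    (hrec : ∀ i ∈ P.R, IsPConstruction P (part i) (inner i)) (h0 : ∀ i ∉ P.R, inner i = ∅) :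
    IsPConstruction P (univ.biUnion part) (compoundEdges P part inner) := by
  refine .step _ part inner rfl hdis (fun i hi heq => ?_) hrec h0
  obtain ⟨j, hji⟩ := hR i hi
  obtain ⟨v, hv⟩ := hpart j
  have hvi : v ∈ part i := heq ▸ mem_biUnion.mpr ⟨j, mem_univ j, hv⟩
  exact disjoint_left.mp (hdis j i hji) hv hvi

lemma embeds_compoundEdges_filter {P : Pattern k} {part : P.ι → Finset ℕ}
    {inner : P.ι → Finset (Finset ℕ)} {V : Finset ℕ} {G : Finset (Finset ℕ)}
    (hG : EdgesUniform k V G) {f : ℕ → ℕ} (hf : Set.InjOn f V)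
    (hfV : ∀ v ∈ V, f v ∈ univ.biUnion part)
    (hfG : ∀ e ∈ G, e.image f ∈ compoundEdges P part inner) :
    Embeds V G (univ.biUnion fun i => V.filter fun v => f v ∈ part i)
      (compoundEdges P (fun i => V.filter fun v => f v ∈ part i)
        (fun i => G.filter fun e => e.image f ∈ inner i)) := by
  have hV : ∀ v ∈ V, v ∈ univ.biUnion fun i => V.filter fun v => f v ∈ part i := by
    intro v hv
    obtain ⟨i, -, hi⟩ := mem_biUnion.mp (hfV v hv)
    exact mem_biUnion.mpr ⟨i, mem_univ i, mem_filter.mpr ⟨hv, hi⟩⟩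
  refine ⟨id, Set.injOn_id _, hV, fun e he => ?_⟩
  rw [image_id]
  have heV : e ⊆ V := (hG e he).1
  rcases mem_union.mp (hfG e he) with hblow | hinner
  · refine mem_union_left _ ((image_mem_blowupEdges_iff (fun v hv => hV v (heV hv))
      (fun v hv => hfV v (heV hv)) (hf.mono (coe_subset.mpr heV)) ?_).mp hblow)
    intro v hv i
    simp only [mem_filter, heV hv, true_and]
  · obtain ⟨i, -, hi⟩ := mem_biUnion.mp hinner
    exact mem_union_right _ (mem_biUnion.mpr ⟨i, mem_univ i, mem_filter.mpr ⟨he, hi⟩⟩)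

lemma embeds_compoundEdges {P : Pattern k} {part part' : P.ι → Finset ℕ}
    {inner inner' : P.ι → Finset (Finset ℕ)}
    (hdis : ∀ i j : P.ι, i ≠ j → Disjoint (part i) (part j))
    (hdis' : ∀ i j : P.ι, i ≠ j → Disjoint (part' i) (part' j))
    (hinner : ∀ i, EdgesUniform k (part i) (inner i))
    (hemb : ∀ i, Embeds (part i) (inner i) (part' i) (inner' i)) :
    Embeds (univ.biUnion part) (compoundEdges P part inner)
      (univ.biUnion part') (compoundEdges P part' inner') := by
  choose g hg hgV hgE using hemb
  let φ : ℕ → ℕ := fun v => if h : ∃ i, v ∈ part i then g h.choose v else v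
  have hφ : ∀ i, ∀ v ∈ part i, φ v = g i v := by
    intro i v hv
    have h : ∃ i, v ∈ part i := ⟨i, hv⟩
    have hi : h.choose = i := by
      by_contra hne
      exact disjoint_left.mp (hdis _ _ hne) h.choose_spec hv
    simp only [φ, dif_pos h, hi]
  have hφpart : ∀ i, ∀ v ∈ part i, φ v ∈ part' i := fun i v hv => hφ i v hv ▸ hgV i v hv
  have hφmem : ∀ v ∈ univ.biUnion part, ∀ i, φ v ∈ part' i ↔ v ∈ part i := by
    intro v hv i
    obtain ⟨j, -, hj⟩ := mem_biUnion.mp hv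
    refine ⟨fun h => ?_, hφpart i v⟩
    obtain rfl : j = i := by
      by_contra hne
      exact disjoint_left.mp (hdis' _ _ hne) (hφpart j v hj) h
    exact hj
  have hφinj : Set.InjOn φ (univ.biUnion part) := by
    intro u hu v hv huv
    obtain ⟨i, -, hi⟩ := mem_biUnion.mp (mem_coe.mp hu)
    have hvi : v ∈ part i := (hφmem v hv i).mp (huv ▸ hφpart i u hi)
    rw [hφ i u hi, hφ i v hvi] at huv
    exact hg i hi hvi huv
  have hφV : ∀ v ∈ univ.biUnion part, φ v ∈ univ.biUnion part' := by
    intro v hv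
    obtain ⟨i, -, hi⟩ := mem_biUnion.mp hv
    exact mem_biUnion.mpr ⟨i, mem_univ i, hφpart i v hi⟩
  refine ⟨φ, hφinj, hφV, fun e he => ?_⟩
  rcases mem_union.mp he with hblow | hinner'
  · have heV : e ⊆ univ.biUnion part := mem_powerset.mp (mem_filter.mp hblow).1
    exact mem_union_left _ ((image_mem_blowupEdges_iff heV (fun v hv => hφV v (heV hv))
      (hφinj.mono (coe_subset.mpr heV)) fun v hv => hφmem v (heV hv)).mpr hblow)
  · obtain ⟨i, -, hi⟩ := mem_biUnion.mp hinner'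
    have hei : e.image φ = e.image (g i) :=
      image_congr fun v hv => hφ i v ((hinner i e hi).1 hv)
    exact mem_union_right _ (mem_biUnion.mpr ⟨i, mem_univ i, hei ▸ hgE i e hi⟩)

lemma embedsInPConstruction_of_forall_filter {P : Pattern k} (hk : 0 < k)
    {part : P.ι → Finset ℕ} (hdis : ∀ i j : P.ι, i ≠ j → Disjoint (part i) (part j))
    (hne : ∀ i ∈ P.R, part i ≠ univ.biUnion part) {inner : P.ι → Finset (Finset ℕ)}
    (hinner : ∀ i, EdgesUniform k (part i) (inner i)) (h0 : ∀ i ∉ P.R, inner i = ∅)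
    {V : Finset ℕ} {G : Finset (Finset ℕ)} (hG : EdgesUniform k V G) {f : ℕ → ℕ}
    (hf : Set.InjOn f V) (hfV : ∀ v ∈ V, f v ∈ univ.biUnion part)
    (hfG : ∀ e ∈ G, e.image f ∈ compoundEdges P part inner)
    (hrec : ∀ i ∈ P.R, EmbedsInPConstruction P (V.filter fun v => f v ∈ part i)
      (G.filter fun e => e.image f ∈ inner i)) :
    EmbedsInPConstruction P V G := by
  set S : P.ι → Finset ℕ := fun i => V.filter fun v => f v ∈ part i
  set I : P.ι → Finset (Finset ℕ) := fun i => G.filter fun e => e.image f ∈ inner i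
  have hSdis : ∀ i j : P.ι, i ≠ j → Disjoint (S i) (S j) := fun i j hij =>
    disjoint_filter.mpr fun _ _ hi hj => disjoint_left.mp (hdis i j hij) hi hj
  have hSI : ∀ i, EdgesUniform k (S i) (I i) := fun i => hG.filter_preimage (hinner i) f
  have hpiece : ∀ i, ∃ W H, IsPConstruction P W H ∧ W.Nonempty ∧ (i ∉ P.R → H = ∅) ∧
      Embeds (S i) (I i) W H := by
    intro i
    by_cases hi : i ∈ P.R
    · obtain ⟨W, H, hWH, hW, hemb⟩ := (hrec i hi).exists_nonempty hk (hSI i)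
      exact ⟨W, H, hWH, hW, absurd hi, hemb⟩
    · refine ⟨insert 0 (S i), ∅, .empty _, insert_nonempty _ _, fun _ => rfl, id,
        Set.injOn_id _, fun v hv => mem_insert_of_mem hv, fun e he => ?_⟩
      simp [I, h0 i hi] at he
  choose W H hWH hW hH0 hemb using hpiece
  -- `ψ i` moves the `i`-th piece into the block `{i} × ℕ` of `ℕ ≃ ℕ × ℕ`, so the pieces become
  -- disjoint
  let ψ : P.ι → ℕ → ℕ := fun i v => Nat.pair (Fintype.equivFin P.ι i) v
  have hψ : ∀ i, Function.Injective (ψ i) := fun i _ _ h => (Nat.pair_eq_pair.mp h).2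
  have hψdis : ∀ i j : P.ι, i ≠ j → Disjoint ((W i).image (ψ i)) ((W j).image (ψ j)) := by
    intro i j hij
    refine disjoint_left.mpr fun x hxi hxj => hij ?_
    obtain ⟨u, -, rfl⟩ := mem_image.mp hxi
    obtain ⟨v, -, huv⟩ := mem_image.mp hxj
    exact (Fintype.equivFin P.ι).injective (Fin.ext (Nat.pair_eq_pair.mp huv).1.symm)
  have hR : ∀ i ∈ P.R, ∃ j, j ≠ i := by
    intro i hi
    by_contra! hall
    exact hne i hi (Subset.antisymm (subset_biUnion_of_mem part (mem_univ i))
      (biUnion_subset.mpr fun j _ => hall j ▸ Subset.rfl))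
  refine ⟨_, _, isPConstruction_compoundEdges hψdis (fun i => (hW i).image (ψ i)) hR
    (fun i _ => (hWH i).image (hψ i)) (fun i hi => by rw [hH0 i hi, image_empty]), ?_⟩
  exact (embeds_compoundEdges_filter hG hf hfV hfG).trans
    (embeds_compoundEdges hSdis hψdis hSI fun i => (hemb i).trans (embeds_image _ _ (hψ i)))

/-- For `s ∈ ℕ ∪ {∞}`: take the blow-up edges of a partition
`V = V₁ ∪ … ∪ V_m` and place an arbitrary `𝓕_s`-free `k`-graph inside each part
`V_i` with `i ∈ R`; the resulting `k`-graph is `𝓕_s`-free. -/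
theorem compound_graph_is_free (k : ℕ) (hk : 0 < k) (P : Pattern k) (s : ℕ∞)
    (V : Finset ℕ) (part : P.ι → Finset ℕ)
    (hcov : Finset.univ.biUnion part = V)
    (hdis : ∀ i j : P.ι, i ≠ j → Disjoint (part i) (part j))
    (hne : ∀ i ∈ P.R, part i ≠ V)
    (inner : P.ι → Finset (Finset ℕ))
    (hU : ∀ i ∈ P.R, EdgesUniform k (part i) (inner i))
    (hF : ∀ i ∈ P.R, IsFree (FamBdd P s) (part i) (inner i))
    (h0 : ∀ i ∉ P.R, inner i = ∅) :
    IsFree (FamBdd P s) V (blowupEdges P part V ∪ Finset.univ.biUnion inner) := by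
  subst hcov
  rintro ⟨F₁, F₂⟩ ⟨⟨hFU, hFcon⟩, hFs⟩ ⟨f, hf, hfV, hfE⟩
  have hinner : ∀ i, EdgesUniform k (part i) (inner i) := fun i =>
    if hi : i ∈ P.R then hU i hi else by simp [EdgesUniform, h0 i hi]
  have hrec : ∀ i ∈ P.R, EmbedsInPConstruction P (F₁.filter fun v => f v ∈ part i)
      (F₂.filter fun e => e.image f ∈ inner i) := by
    intro i hi
    by_contra hno
    have hmem : (F₁.filter fun v => f v ∈ part i, F₂.filter fun e => e.image f ∈ inner i)
        ∈ FamBdd P s :=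
      ⟨⟨hFU.filter_preimage (hU i hi) f, fun W H hWH hemb => hno ⟨W, H, hWH, hemb⟩⟩,
        le_trans (by exact_mod_cast card_le_card (filter_subset _ _)) hFs⟩
    exact hF i hi _ hmem (embeds_filter_preimage F₂ hf (part i) (inner i))
  obtain ⟨W, H, hWH, hemb⟩ :=
    embedsInPConstruction_of_forall_filter hk hdis hne hinner h0 hFU hf hfV hfE hrec
  exact hFcon W H hWH hemb
end
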